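/- Let T be a finite combinatorial tree, α ∈ [0,1), and i, j two non-adjacent nodes. Then κ^{or,α}_{ij} = (2(1−α)/d(i,j))·(1/deg(i) + 1/deg(j) − 1). -/

import Mathlib

/-!
Since `i` and `j` are at distance at least 2 in a tree, every `a` with `a = j` or `a ~ j` and
every `b` with `b = i` or `b ~ i` satisfy `d(a, b) = d(a, i) + d(b, j) - d(i, j)`. The transport
cost is therefore additive on the support of `m_j ⊗ m_i`, every coupling costs the same, and
`W₁ = ∑ₐ m_j(a) d(a, i) + ∑_b m_i(b) d(b, j) - d(i, j)`. Exactly one neighbour of `i` is closer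
to `j` and the other `deg i - 1` are farther, so
`∑_b m_i(b) d(b, j) = d(i, j) + (1 - α)(1 - 2 / deg i)`.
-/

/-- 1-Wasserstein distance on a graph w.r.t. the shortest path metric. -/
noncomputable def W1 {V : Type*} [Fintype V] (G : SimpleGraph V) (μ ν : V → ℝ) : ℝ :=
  sInf { c : ℝ | ∃ π : V → V → ℝ, (∀ i j, 0 ≤ π i j) ∧
    (∀ j, ∑ i, π i j = μ j) ∧ (∀ i, ∑ j, π i j = ν i) ∧
    c = ∑ i, ∑ j, π i j * (G.dist i j : ℝ) }

/-- The α-lazy random walk measure at `x`. -/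
noncomputable def lazy {V : Type*} [Fintype V] [DecidableEq V] (G : SimpleGraph V)
    [DecidableRel G.Adj] (α : ℝ) (x : V) : V → ℝ :=
  fun y => if y = x then α else if G.Adj x y then (1 - α) / (G.degree x : ℝ) else 0

namespace SimpleGraph

variable {V : Type*} {G : SimpleGraph V} {u v : V}

theorem Connected.exists_adj_dist_add_one_eq (hG : G.Connected) (huv : u ≠ v) :
    ∃ w, G.Adj u w ∧ G.dist w v + 1 = G.dist u v := by
  obtain ⟨p, hp⟩ := hG.exists_walk_length_eq_dist u v
  cases p with
  | nil => exact absurd rfl huv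
  | @cons _ w _ h q =>
    refine ⟨w, h, le_antisymm ?_ ?_⟩
    · simpa [← hp] using dist_le q
    · have := hG.dist_triangle (u := u) (v := w) (w := v)
      rw [dist_eq_one_iff_adj.mpr h] at this
      omega

theorem IsTree.eq_of_adj_of_dist_add_one_eq (hG : G.IsTree) {x y : V} (hx : G.Adj u x)
    (hy : G.Adj u y) (hxv : G.dist x v + 1 = G.dist u v) (hyv : G.dist y v + 1 = G.dist u v) :
    x = y := by
  obtain ⟨p, hp⟩ := hG.connected.exists_walk_length_eq_dist x v
  obtain ⟨q, hq⟩ := hG.connected.exists_walk_length_eq_dist y v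
  have hxp : (Walk.cons hx p).IsPath := Walk.isPath_of_length_eq_dist _ (by simp [hp, hxv])
  have hyq : (Walk.cons hy q).IsPath := Walk.isPath_of_length_eq_dist _ (by simp [hq, hyv])
  have hpq := (hG.isAcyclic.subsingleton_path u v).elim ⟨_, hxp⟩ ⟨_, hyq⟩
  simpa using congrArg (fun p : G.Path u v => p.1.snd) hpq

theorem IsTree.dist_add_dist_eq (hG : G.IsTree) {x y : V} (hx : x = u ∨ G.Adj u x)
    (hy : y = v ∨ G.Adj v y) (huv : 1 < G.dist u v) :
    G.dist x y + G.dist u v = G.dist x v + G.dist u y := by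
  rcases hx with rfl | hx
  · exact add_comm _ _
  rcases hy with rfl | hy
  · rfl
  have hvu : G.dist v u = G.dist u v := dist_comm
  have hvx : G.dist v x = G.dist x v := dist_comm
  have hyu : G.dist y u = G.dist u y := dist_comm
  have hyx : G.dist y x = G.dist x y := dist_comm
  have hyv : G.dist y v = 1 := dist_eq_one_iff_adj.mpr hy.symm
  have hxu : G.dist x u = 1 := dist_eq_one_iff_adj.mpr hx.symm
  have h1 := hG.dist_eq_dist_add_one_of_adj v hx
  have h2 := hG.dist_eq_dist_add_one_of_adj u hy
  have h3 := hG.dist_eq_dist_add_one_of_adj y hx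
  have h4 := hG.dist_eq_dist_add_one_of_adj x hy
  -- `h3`, `h4` leave two candidates for `d(x, y)`, which coincide unless `x`, `y` are both
  -- closer to the opposite end or both farther from it.
  rcases h1 with hxv | hxv <;> rcases h2 with huy | huy
  · -- The first step from `u` towards `y` also goes towards `v`, so it is `x`.
    have huy_ne : u ≠ y := by rintro rfl; simp at huy; omega
    obtain ⟨z, hz, hzy⟩ := hG.connected.exists_adj_dist_add_one_eq huy_ne
    have hzv : G.dist z v ≤ G.dist z y + G.dist y v := hG.connected.dist_triangle
    have hvz := hG.dist_eq_dist_add_one_of_adj v hz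
    have hvz' : G.dist v z = G.dist z v := dist_comm
    obtain rfl : z = x := hG.eq_of_adj_of_dist_add_one_eq (v := v) hz hx (by omega) (by omega)
    omega
  · omega
  · omega
  · -- The first step from `x` towards `y` is either `u` or leads away from `v`.
    have hxy_ne : x ≠ y := by rintro rfl; omega
    obtain ⟨z, hz, hzy⟩ := hG.connected.exists_adj_dist_add_one_eq hxy_ne
    have hzv : G.dist z v ≤ G.dist z y + G.dist y v := hG.connected.dist_triangle
    have hvz' : G.dist v z = G.dist z v := dist_comm
    rcases hG.dist_eq_dist_add_one_of_adj v hz with hvz | hvz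
    · obtain rfl : z = u :=
        hG.eq_of_adj_of_dist_add_one_eq (v := v) hz hx.symm (by omega) (by omega)
      omega
    · omega

theorem IsTree.sum_dist_neighborFinset_add_two (hG : G.IsTree) [Fintype (G.neighborSet u)]
    (huv : u ≠ v) :
    ∑ w ∈ G.neighborFinset u, G.dist w v + 2 = G.degree u * (G.dist u v + 1) := by
  classical
  obtain ⟨x, hx, hxv⟩ := hG.connected.exists_adj_dist_add_one_eq huv
  have hxN : x ∈ G.neighborFinset u := (mem_neighborFinset G u x).mpr hx
  have hfar : ∀ w ∈ (G.neighborFinset u).erase x, G.dist w v = G.dist u v + 1 := by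
    intro w hw
    obtain ⟨hwx, hwN⟩ := Finset.mem_erase.mp hw
    rw [mem_neighborFinset] at hwN
    have hvw : G.dist v w = G.dist w v := dist_comm
    have hvu : G.dist v u = G.dist u v := dist_comm
    rcases hG.dist_eq_dist_add_one_of_adj v hwN with h | h
    · exact absurd (hG.eq_of_adj_of_dist_add_one_eq hwN hx (by omega) hxv) hwx
    · omega
  rw [← Finset.add_sum_erase _ _ hxN, Finset.sum_congr rfl hfar, Finset.sum_const,
    Finset.card_erase_of_mem hxN, card_neighborFinset_eq_degree, smul_eq_mul]
  obtain ⟨k, hk⟩ := Nat.exists_eq_add_one_of_ne_zero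
    ((G.degree_pos_iff_exists_adj u).mpr ⟨x, hx⟩).ne'
  rw [hk, Nat.add_sub_cancel, add_one_mul]
  omega

end SimpleGraph

open Finset

section Transport

variable {V : Type*} [Fintype V]

theorem sum_sum_mul_eq_of_marginals {μ ν : V → ℝ} {π C : V → V → ℝ} (hπ : ∀ a b, 0 ≤ π a b)
    (hμ : ∀ b, ∑ a, π a b = μ b) (hν : ∀ a, ∑ b, π a b = ν a) (f g : V → ℝ)
    (hC : ∀ a b, ν a ≠ 0 → μ b ≠ 0 → C a b = f a + g b) :
    ∑ a, ∑ b, π a b * C a b = ∑ a, ν a * f a + ∑ b, μ b * g b := by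
  have hsplit : ∀ a b, π a b * C a b = π a b * f a + π a b * g b := by
    intro a b
    rcases (hπ a b).eq_or_lt with h | h
    · simp [← h]
    have hνa : ν a ≠ 0 := (h.trans_le
      ((hν a) ▸ single_le_sum (fun b' _ => hπ a b') (mem_univ b))).ne'
    have hμb : μ b ≠ 0 := (h.trans_le
      ((hμ b) ▸ single_le_sum (fun a' _ => hπ a' b) (mem_univ a))).ne'
    rw [hC a b hνa hμb, mul_add]
  simp only [hsplit, sum_add_distrib, ← sum_mul, hν]
  rw [sum_comm]
  simp only [← sum_mul, hμ]

theorem W1_eq_of_dist_eq_add (G : SimpleGraph V) {μ ν : V → ℝ} (hμ : ∀ b, 0 ≤ μ b)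
    (hν : ∀ a, 0 ≤ ν a) (hμ1 : ∑ b, μ b = 1) (hν1 : ∑ a, ν a = 1) (f g : V → ℝ)
    (hdist : ∀ a b, ν a ≠ 0 → μ b ≠ 0 → (G.dist a b : ℝ) = f a + g b) :
    W1 G μ ν = ∑ a, ν a * f a + ∑ b, μ b * g b := by
  have hcost := fun π hπ hμπ hνπ =>
    sum_sum_mul_eq_of_marginals (C := fun a b => (G.dist a b : ℝ)) (π := π) hπ hμπ hνπ f g hdist
  have hprod_μ : ∀ b, ∑ a, ν a * μ b = μ b := fun b => by rw [← sum_mul, hν1, one_mul]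
  have hprod_ν : ∀ a, ∑ b, ν a * μ b = ν a := fun a => by rw [← mul_sum, hμ1, mul_one]
  have hprod := fun a b => mul_nonneg (hν a) (hμ b)
  rw [W1, ← csInf_singleton (∑ a, ν a * f a + ∑ b, μ b * g b)]
  congr 1
  ext c
  constructor
  · rintro ⟨π, hπ, hμπ, hνπ, rfl⟩
    exact hcost π hπ hμπ hνπ
  · rintro rfl
    exact ⟨_, hprod, hprod_μ, hprod_ν, (hcost _ hprod hprod_μ hprod_ν).symm⟩

end Transport

section LazyWalk

variable {V : Type*} [Fintype V] [DecidableEq V] {G : SimpleGraph V} [DecidableRel G.Adj]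
  {α : ℝ}

theorem lazy_nonneg (hα0 : 0 ≤ α) (hα1 : α ≤ 1) (x y : V) : 0 ≤ lazy G α x y := by
  unfold lazy
  split_ifs
  · exact hα0
  · exact div_nonneg (sub_nonneg.mpr hα1) (Nat.cast_nonneg _)
  · exact le_rfl

theorem eq_or_adj_of_lazy_ne_zero {x y : V} (h : lazy G α x y ≠ 0) : y = x ∨ G.Adj x y := by
  unfold lazy at h
  split_ifs at h with h1 h2
  · exact Or.inl h1
  · exact Or.inr h2
  · exact absurd rfl h

theorem sum_lazy_mul (x : V) (f : V → ℝ) :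
    ∑ y, lazy G α x y * f y =
      α * f x + (1 - α) / G.degree x * ∑ y ∈ G.neighborFinset x, f y := by
  have hsplit : ∀ y, lazy G α x y * f y =
      (if y = x then α * f y else 0) + if G.Adj x y then (1 - α) / G.degree x * f y else 0 := by
    intro y
    unfold lazy
    by_cases h : y = x <;> simp [h]
  simp only [hsplit, sum_add_distrib, sum_ite_eq', mem_univ, if_true, ← sum_filter,
    ← SimpleGraph.neighborFinset_eq_filter, mul_sum]

theorem sum_lazy {x : V} (hx : 0 < G.degree x) : ∑ y, lazy G α x y = 1 := by
  have h := sum_lazy_mul (G := G) (α := α) x (fun _ => 1)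
  simp only [mul_one, sum_const, SimpleGraph.card_neighborFinset_eq_degree, nsmul_eq_mul] at h
  rw [h]
  field_simp
  ring

end LazyWalk

namespace SimpleGraph

variable {V : Type*} [Fintype V] [DecidableEq V] {G : SimpleGraph V} [DecidableRel G.Adj]
  {i j : V}

theorem IsTree.sum_lazy_mul_dist (hG : G.IsTree) (α : ℝ) (hij : i ≠ j) :
    ∑ b, lazy G α i b * G.dist b j = G.dist i j + (1 - α) * (1 - 2 / G.degree i) := by
  have hdeg : (G.degree i : ℝ) ≠ 0 := by
    exact_mod_cast ((hG.connected i j).degree_pos_left hij).ne'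
  have hsum : ∑ b ∈ G.neighborFinset i, (G.dist b j : ℝ) = G.degree i * (G.dist i j + 1) - 2 := by
    rw [eq_sub_iff_add_eq]
    exact_mod_cast hG.sum_dist_neighborFinset_add_two hij
  rw [sum_lazy_mul, hsum]
  field_simp
  ring

theorem IsTree.W1_lazy (hG : G.IsTree) {α : ℝ} (hα0 : 0 ≤ α) (hα1 : α ≤ 1)
    (hij : 1 < G.dist i j) :
    W1 G (lazy G α i) (lazy G α j) =
      ∑ a, lazy G α j a * G.dist a i + ∑ b, lazy G α i b * G.dist b j - G.dist i j := by
  have hne : i ≠ j := by rintro rfl; simp at hij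
  rw [W1_eq_of_dist_eq_add G (lazy_nonneg hα0 hα1 i) (lazy_nonneg hα0 hα1 j)
    (sum_lazy ((hG.connected i j).degree_pos_left hne))
    (sum_lazy ((hG.connected i j).degree_pos_right hne)) (fun a => G.dist a i - G.dist i j)
    (fun b => G.dist b j)]
  · simp only [mul_sub, Finset.sum_sub_distrib, ← Finset.sum_mul,
      sum_lazy ((hG.connected i j).degree_pos_right hne)]
    ring
  · intro a b ha hb
    have h := hG.dist_add_dist_eq (eq_or_adj_of_lazy_ne_zero ha)
      (eq_or_adj_of_lazy_ne_zero hb) (by rwa [dist_comm])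
    rw [dist_comm (u := j), dist_comm (u := j)] at h
    have h' : (G.dist a b : ℝ) + G.dist i j = G.dist a i + G.dist b j := by exact_mod_cast h
    linarith

end SimpleGraph

open SimpleGraph

theorem stmt_13 {V : Type*} [Fintype V] [DecidableEq V] (G : SimpleGraph V)
    [DecidableRel G.Adj] (hT : G.IsTree) (α : ℝ) (hα : α ∈ Set.Ico (0 : ℝ) 1)
    (i j : V) (hne : i ≠ j) (hnadj : ¬ G.Adj i j) :
    1 - W1 G (lazy G α i) (lazy G α j) / (G.dist i j : ℝ) =
      (2 * (1 - α) / (G.dist i j : ℝ)) *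
        (1 / (G.degree i : ℝ) + 1 / (G.degree j : ℝ) - 1) := by
  have hij := hT.connected.one_lt_dist_of_ne_of_not_adj hne hnadj
  have hD : (G.dist i j : ℝ) ≠ 0 := by positivity
  rw [hT.W1_lazy hα.1 hα.2.le hij, hT.sum_lazy_mul_dist α hne,
    hT.sum_lazy_mul_dist α hne.symm, dist_comm (u := j)]
  field_simp
  ring
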